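/- arXiv:1311.1730 — 5 statements merged into one kernel-verified Lean document; each statement's English description precedes it below -/
import Mathlib

section
/- Let G be a finite group acting linearly on a finite-dimensional vector space V over a finite field, and let G act on the dual space V* by (g·λ)(v) = λ(g⁻¹·v) for g ∈ G, λ ∈ V*, v ∈ V. Then the number of orbits of G on V equals the number of orbits of G on V*. -/
/-!
By Burnside's lemma the number of orbits of a finite group is the average number of fixed points
of its elements, so it suffices to match fixed-point counts element by element. The functionals
fixed by `g` form the kernel of the transpose of `ρ g⁻¹ - 1`, which has the same dimension as
`ker (ρ g⁻¹ - 1)` because a linear map and its transpose have the same rank; over a finite field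
equal dimension means equal cardinality, and `g⁻¹` fixes the same vectors as `g`.
-/

open Module MulAction

namespace MulAction

variable {G α β : Type*} [Group G] [MulAction G α] [MulAction G β]

theorem sum_natCard_fixedBy_eq_natCard_orbits_mul_natCard_group [Fintype G] [Finite α] :
    ∑ g : G, Nat.card (fixedBy α g) = Nat.card (orbitRel.Quotient G α) * Nat.card G := by
  rw [← Nat.card_sigma, Nat.card_congr (sigmaFixedByEquivOrbitsProdGroup G α), Nat.card_prod]

theorem natCard_orbits_eq_of_natCard_fixedBy_eq [Finite G] [Finite α] [Finite β]
    (h : ∀ g : G, Nat.card (fixedBy α g) = Nat.card (fixedBy β g)) :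
    Nat.card (orbitRel.Quotient G α) = Nat.card (orbitRel.Quotient G β) := by
  have := Fintype.ofFinite G
  refine Nat.eq_of_mul_eq_mul_right (Nat.card_pos (α := G)) ?_
  simp only [← sum_natCard_fixedBy_eq_natCard_orbits_mul_natCard_group, h]

variable (G α) in
def quotExistsSMulEqEquiv : Quot (fun a b : α => ∃ g : G, g • a = b) ≃ orbitRel.Quotient G α :=
  Quot.congrRight fun _ _ => mem_orbit_symm

end MulAction

namespace LinearMap

theorem natCard_fixed_eq_natCard_ker {R M : Type*} [Ring R] [AddCommGroup M] [Module R M]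
    (f : Module.End R M) : Nat.card {v // f v = v} = Nat.card (ker (f - 1)) :=
  Nat.card_congr <| Equiv.subtypeEquivRight fun v => by simp [sub_eq_zero]

variable {K V : Type*} [Field K] [AddCommGroup V] [Module K V] [FiniteDimensional K V]

theorem finrank_ker_dualMap_eq_finrank_ker (f : Module.End K V) :
    finrank K (ker f.dualMap) = finrank K (ker f) := by
  have := finrank_range_add_finrank_ker f
  have := finrank_range_add_finrank_ker f.dualMap
  have := finrank_range_dualMap_eq_finrank_range f
  have := Subspace.dual_finrank_eq (K := K) (V := V)
  omega

theorem natCard_ker_dualMap_eq_natCard_ker (f : Module.End K V) :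
    Nat.card (ker f.dualMap) = Nat.card (ker f) := by
  rw [natCard_eq_pow_finrank (K := K) (V := ker f.dualMap),
    natCard_eq_pow_finrank (K := K) (V := ker f), finrank_ker_dualMap_eq_finrank_ker]

theorem natCard_fixed_dualMap_eq_natCard_fixed (f : Module.End K V) :
    Nat.card {l : Dual K V // f.dualMap l = l} = Nat.card {v // f v = v} := by
  have h : f.dualMap - 1 = (f - 1).dualMap := by
    rw [dualMap_def, dualMap_def, map_sub]
    rfl
  rw [natCard_fixed_eq_natCard_ker, natCard_fixed_eq_natCard_ker, h,
    natCard_ker_dualMap_eq_natCard_ker]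

end LinearMap

namespace Representation

theorem natCard_orbits_eq_of_natCard_fixed_eq {k G W W' : Type*} [CommSemiring k] [Group G]
    [AddCommMonoid W] [Module k W] [AddCommMonoid W'] [Module k W'] [Finite G] [Finite W]
    [Finite W'] (σ : Representation k G W) (τ : Representation k G W')
    (h : ∀ g, Nat.card {w // σ g w = w} = Nat.card {w // τ g w = w}) :
    Nat.card (Quot fun v w : W => ∃ g : G, σ g v = w) =
      Nat.card (Quot fun v w : W' => ∃ g : G, τ g v = w) := by
  let := MulAction.compHom W σ
  let := MulAction.compHom W' τ
  calc Nat.card (Quot fun v w : W => ∃ g : G, σ g v = w)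
      _ = Nat.card (orbitRel.Quotient G W) := Nat.card_congr (quotExistsSMulEqEquiv G W)
      _ = Nat.card (orbitRel.Quotient G W') := natCard_orbits_eq_of_natCard_fixedBy_eq h
      _ = Nat.card (Quot fun v w : W' => ∃ g : G, τ g v = w) :=
        (Nat.card_congr (quotExistsSMulEqEquiv G W')).symm

theorem natCard_fixed_dual_eq_natCard_fixed {K G V : Type*} [Field K] [Group G] [AddCommGroup V]
    [Module K V] [FiniteDimensional K V] (ρ : Representation K G V) (g : G) :
    Nat.card {l // ρ.dual g l = l} = Nat.card {v // ρ g v = v} := by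
  rw [dual_apply, ← LinearMap.dualMap_def, LinearMap.natCard_fixed_dualMap_eq_natCard_fixed]
  exact Nat.card_congr <| Equiv.subtypeEquivRight fun v => ρ.inv_apply_eq_iff.trans eq_comm

end Representation

/-- Let `G` be a finite group acting linearly on a finite-dimensional
vector space `V` over a finite field, with the dual action `(g • λ)(v) = λ(g⁻¹ • v)` on
`V*`.  Then the number of orbits of `G` on `V` equals the number of orbits of `G` on `V*`. -/
theorem orbit_count_eq_dual_orbit_count
    {F V G : Type*} [Field F] [Fintype F] [AddCommGroup V] [Module F V]
    [FiniteDimensional F V] [Group G] [Finite G]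
    (ρ : Representation F G V) :
    Nat.card (Quot (fun v w : V => ∃ g : G, ρ g v = w)) =
      Nat.card (Quot (fun lam mu : Module.Dual F V =>
        ∃ g : G, lam ∘ₗ ρ g⁻¹ = mu)) := by
  have : Finite V := Module.finite_of_finite F
  have : Finite (Dual F V) := Module.finite_of_finite F
  exact ρ.natCard_orbits_eq_of_natCard_fixed_eq ρ.dual fun g =>
    (ρ.natCard_fixed_dual_eq_natCard_fixed g).symm
end

section
/- Let G be a finite group, V a finite-dimensional vector space over F_q, and f : G → V a bijection. Suppose G acts linearly on V in such a way that f(hgh⁻¹) = h·f(g) for all g, h ∈ G, with the dual action on V* given by (h·μ)(v) = μ(h⁻¹·v). Let H be a subgroup of G such that W = f(H) is a subspace of V, and let λ ∈ W* be such that the function h ↦ θ(λ(f(h))) on H is constant on each conjugacy class of H. Then for every g ∈ G, (1/|H|) · Σ_{h ∈ G with hgh⁻¹ ∈ H} θ(λ(f(hgh⁻¹))) = (1/|G|) · Σ_{h ∈ G} Σ_{μ ∈ V* with μ|_W = λ} θ((h·μ)(f(g))); that is, the induced class function Ind_H^G(θ∘λ∘f) equals (1/|G|) Σ_{h ∈ G}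 Σ_{μ|_W = λ} θ∘(h·μ)∘f. -/
/-!
The functionals `μ` with `μ|_W = λ` form the coset `λ + W^⊥`. Since `ν ↦ θ (ν v)` is a character of
`W^⊥`, trivial exactly when `v ∈ W`, summing `θ (μ v)` over that coset gives `|W^⊥| θ (λ v)` if
`v ∈ W` and `0` otherwise. For `v = h⁻¹ • f g = f (h⁻¹ g h)` the condition `v ∈ W` reads
`h⁻¹ g h ∈ H`, so after `h ↦ h⁻¹` the right-hand side is `|W^⊥| / |G|` times the sum defining
the induced function, and `|G| = |V| = |W| |W^⊥| = |H| |W^⊥|`.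
-/

open Module

section DualAnnihilator

variable {F V : Type*} [Field F] [AddCommGroup V] [Module F V] [FiniteDimensional F V]

theorem Subspace.natCard_mul_natCard_dualAnnihilator (W : Subspace F V) :
    Nat.card W * Nat.card W.dualAnnihilator = Nat.card V := by
  rw [Module.natCard_eq_pow_finrank (K := F) (V := W),
    Module.natCard_eq_pow_finrank (K := F) (V := W.dualAnnihilator),
    Module.natCard_eq_pow_finrank (K := F) (V := V), ← pow_add,
    W.finrank_add_finrank_dualAnnihilator_eq]

variable {R : Type*} [CommRing R] [IsDomain R] [Finite F] (θ : AddChar F R)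

theorem Subspace.finsum_dualAnnihilator_addChar_apply (hθ : θ ≠ 0) (W : Subspace F V)
    (v : V) [Decidable (v ∈ W)] :
    ∑ᶠ ν : W.dualAnnihilator, θ (ν v) =
      if v ∈ W then (Nat.card W.dualAnnihilator : R) else 0 := by
  have : Finite (Dual F V) := Module.finite_of_finite F
  have := Fintype.ofFinite W.dualAnnihilator
  let ψ : AddChar W.dualAnnihilator R :=
    θ.compAddMonoidHom (LinearMap.applyₗ v ∘ₗ W.dualAnnihilator.subtype).toAddMonoidHom
  have hψ : ψ = 0 ↔ v ∈ W := by
    refine ⟨fun hψ => ?_, fun hv => ?_⟩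
    · by_contra hv
      obtain ⟨ν, hνW, hνv⟩ : ∃ ν ∈ W.dualAnnihilator, ν v ≠ 0 := by
        simpa using mt (W.forall_mem_dualAnnihilator_apply_eq_zero_iff v).mp hv
      obtain ⟨a, ha⟩ := AddChar.ne_zero_iff.mp hθ
      -- rescaling `ν` makes it take the value `a` at `v`
      have hscaled := DFunLike.congr_fun hψ ⟨(a / ν v) • ν, W.dualAnnihilator.smul_mem _ hνW⟩
      simp [ψ, div_mul_cancel₀ a hνv] at hscaled
      exact ha hscaled
    · ext ν
      simp [ψ, (W.mem_dualAnnihilator ν).mp ν.2 v hv]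
  rw [finsum_eq_sum_of_fintype]
  exact (AddChar.sum_eq_ite ψ).trans (by rw [Nat.card_eq_fintype_card]; exact if_congr hψ rfl rfl)

theorem Subspace.finsum_extensions_addChar_apply (hθ : θ ≠ 0) (W : Subspace F V) (lam : Dual F V)
    (v : V) [Decidable (v ∈ W)] :
    ∑ᶠ μ ∈ {μ : Dual F V | ∀ w ∈ W, μ w = lam w}, θ (μ v) =
      if v ∈ W then Nat.card W.dualAnnihilator * θ (lam v) else 0 := by
  have hcoset : {μ : Dual F V | ∀ w ∈ W, μ w = lam w} = (lam + ·) '' W.dualAnnihilator := by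
    ext μ
    refine ⟨fun hμ => ⟨μ - lam, ?_, add_sub_cancel lam μ⟩, ?_⟩
    · exact (W.mem_dualAnnihilator _).mpr fun w hw => by simp [hμ w hw]
    · rintro ⟨ν, hν, rfl⟩ w hw
      simp [(W.mem_dualAnnihilator ν).mp hν w hw]
  rw [hcoset, finsum_mem_image (add_right_injective lam).injOn]
  simp only [LinearMap.add_apply, AddChar.map_add_eq_mul]
  rw [← mul_finsum_mem, ← finsum_set_coe_eq_finsum_mem]
  change θ (lam v) * ∑ᶠ ν : W.dualAnnihilator, θ (ν v) = _
  rw [W.finsum_dualAnnihilator_addChar_apply θ hθ]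
  split_ifs <;> simp [mul_comm]

end DualAnnihilator

theorem induced_character_formula_general
    {F V G : Type*} [Field F] [Fintype F] [AddCommGroup V] [Module F V]
    [FiniteDimensional F V] [Group G] [Fintype G]
    (θ : AddChar F ℂ) (hθ : ∃ a : F, θ a ≠ 1)
    (ρ : Representation F G V)
    (f : G ≃ V)
    (hf : ∀ g h : G, f (h * g * h⁻¹) = ρ h (f g))
    (H : Subgroup G) (W : Submodule F V)
    (hW : f '' (H : Set G) = (W : Set V))
    (lam : Module.Dual F V) :
    ∀ g : G,
      (Nat.card H : ℂ)⁻¹ *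
          ∑ᶠ h ∈ {h : G | h * g * h⁻¹ ∈ H}, θ (lam (f (h * g * h⁻¹))) =
        (Nat.card G : ℂ)⁻¹ *
          ∑ᶠ h : G, ∑ᶠ mu ∈ {mu : Module.Dual F V | ∀ w ∈ W, mu w = lam w},
            θ (mu (ρ h⁻¹ (f g))) := by
  classical
  intro g
  have hmem (x : G) : f x ∈ W ↔ x ∈ H := by
    rw [← SetLike.mem_coe, ← hW, f.injective.mem_set_image, SetLike.mem_coe]
  have hcard : (Nat.card H * Nat.card W.dualAnnihilator : ℂ) = Nat.card G := by
    have hHW : Nat.card H = Nat.card W := Nat.card_congr ((f.image H).trans (Equiv.setCongr hW))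
    rw [hHW, Nat.card_congr f]
    exact_mod_cast Subspace.natCard_mul_natCard_dualAnnihilator W
  have hA : (Nat.card W.dualAnnihilator : ℂ) ≠ 0 :=
    right_ne_zero_of_mul (hcard ▸ Nat.cast_ne_zero.mpr Nat.card_pos.ne')
  have hρ (h : G) : ρ h⁻¹ (f g) = f (h⁻¹ * g * h) := by rw [← hf, inv_inv]
  calc (Nat.card H : ℂ)⁻¹ * ∑ᶠ h ∈ {h : G | h * g * h⁻¹ ∈ H}, θ (lam (f (h * g * h⁻¹)))
      = (Nat.card G : ℂ)⁻¹ * (Nat.card W.dualAnnihilator *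
          ∑ᶠ h ∈ {h : G | h * g * h⁻¹ ∈ H}, θ (lam (f (h * g * h⁻¹)))) := by
        rw [← hcard, mul_inv, mul_assoc, inv_mul_cancel_left₀ hA]
    _ = (Nat.card G : ℂ)⁻¹ * ∑ᶠ h : G, if h⁻¹ * g * h ∈ H then
          Nat.card W.dualAnnihilator * θ (lam (f (h⁻¹ * g * h))) else 0 := by
        rw [mul_finsum_mem, ← finsum_comp_equiv (Equiv.inv G)]
        simp only [Equiv.inv_apply, inv_inv, finsum_eq_if, Set.mem_ofPred_eq]
    _ = _ := by
      simp only [hρ, Subspace.finsum_extensions_addChar_apply θ (AddChar.ne_zero_iff.mpr hθ), hmem]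

/-- Let `G` be a finite group, `V` a finite-dimensional vector space over a
finite field `F` (= `F_q`), and `f : G → V` a bijection.  Suppose `G` acts linearly on `V` with
`f (h g h⁻¹) = h • f g`, the dual action on `V*` being `(h • μ)(v) = μ(h⁻¹ • v)`.  Let `H ≤ G`
with `W = f(H)` a subspace of `V`, and let `λ ∈ W*` (encoded as a functional on `V`, only its
values on `W` being relevant) be such that `h ↦ θ(λ(f h))` is a class function of `H`.  Then
`Ind_H^G (θ ∘ λ ∘ f) (g) = (1/|G|) Σ_{h ∈ G} Σ_{μ|_W = λ} θ((h • μ)(f g))` for every `g ∈ G`. -/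
theorem induced_character_formula
    {F V G : Type*} [Field F] [Fintype F] [AddCommGroup V] [Module F V]
    [FiniteDimensional F V] [Group G] [Fintype G]
    (θ : AddChar F ℂ) (hθ : ∃ a : F, θ a ≠ 1)
    (ρ : Representation F G V)
    (f : G ≃ V)
    (hf : ∀ g h : G, f (h * g * h⁻¹) = ρ h (f g))
    (H : Subgroup G) (W : Submodule F V)
    (hW : f '' (H : Set G) = (W : Set V))
    (lam : Module.Dual F V)
    (hclass : ∀ g ∈ H, ∀ h ∈ H, θ (lam (f (h * g * h⁻¹))) = θ (lam (f g))) :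
    ∀ g : G,
      (Nat.card H : ℂ)⁻¹ *
          ∑ᶠ h ∈ {h : G | h * g * h⁻¹ ∈ H}, θ (lam (f (h * g * h⁻¹))) =
        (Nat.card G : ℂ)⁻¹ *
          ∑ᶠ h : G, ∑ᶠ mu ∈ {mu : Module.Dual F V | ∀ w ∈ W, mu w = lam w},
            θ (mu (ρ h⁻¹ (f g))) :=
  induced_character_formula_general θ hθ ρ f hf H W hW lam
end

section
/- Let 𝔤 be a finite-dimensional nilpotent associative (non-unital) algebra over F_q and G = 1 + 𝔤 the associated algebra group. For λ ∈ 𝔤*, set 𝔩_λ = {x ∈ 𝔤 | λ(yx) = 0 for all y ∈ 𝔤}. Then the left orbit Gλ = {gλ | g ∈ G}, where (gλ)(x) = λ(g⁻¹x), equals {μ ∈ 𝔤* | μ(x) = λ(x) for all x ∈ 𝔩_λ}. -/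
/-!
Write `B x z = λ(xz)`, so that `𝔩_λ` is the right kernel of `B`. If `g⁻¹ = 1 + x` then
`(gλ)(z) = λ((1 + x)z) = λ(z) + B x z`, so the orbit of `λ` is `λ + range B`, since every
`1 + x` is invertible by nilpotency of `𝔤`. In finite dimension the range of `B` is the
annihilator of its right kernel, which is the claim.
-/

open LinearMap

namespace Unitization

variable {R A : Type*} [CommRing R] [NonUnitalRing A] [Module R A]

theorem snd_one_add_inr_mul_inr (x z : A) :
    ((1 + (x : Unitization R A)) * z).snd = z + x * z := by
  simp [snd_mul]

variable [IsScalarTower R A A] [SMulCommClass R A A]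

theorem isUnit_one_add_inr {N : ℕ}
    (hN : ∀ g : Fin N → A, (List.ofFn fun i => (g i : Unitization R A)).prod = 0) (x : A) :
    IsUnit (1 + (x : Unitization R A)) :=
  IsNilpotent.isUnit_one_add
    ⟨N, by simpa [List.ofFn_const, List.prod_replicate] using hN fun _ => x⟩

end Unitization

theorem LinearMap.range_eq_dualAnnihilator_ker_flip {K V W : Type*} [Field K]
    [AddCommGroup V] [Module K V] [AddCommGroup W] [Module K W] [FiniteDimensional K V]
    (B : V →ₗ[K] W →ₗ[K] K) :
    range B = (ker B.flip).dualAnnihilator := by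
  rw [dualAnnihilator_ker_eq_range_flip, flip_flip]

open Unitization in
theorem left_orbit_eq_functionals_agreeing_on_left_ideal_general
    {F A : Type*} [Field F] [NonUnitalRing A] [Module F A]
    [SMulCommClass F A A] [IsScalarTower F A A] [FiniteDimensional F A]
    (hnil : ∃ N : ℕ, 0 < N ∧
      ∀ g : Fin N → A, (List.ofFn fun i => (g i : Unitization F A)).prod = 0)
    (Gsub : Subgroup (Unitization F A)ˣ)
    (hG : ∀ g : (Unitization F A)ˣ, g ∈ Gsub ↔ ∃ x : A, (g : Unitization F A) = 1 + x)
    (lam : Module.Dual F A) :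
    {mu : Module.Dual F A | ∃ g : Gsub, ∀ z : A,
        mu z = lam ((((g⁻¹ : Gsub) : (Unitization F A)ˣ) * (z : Unitization F A)).snd)} =
      {mu : Module.Dual F A | ∀ x : A, (∀ y : A, lam (y * x) = 0) → mu x = lam x} := by
  set B := (LinearMap.mul F A).compr₂ lam
  ext mu
  constructor
  · rintro ⟨g, hg⟩ x hx
    obtain ⟨y, hy⟩ := (hG _).mp (g⁻¹).2
    rw [hg, hy, snd_one_add_inr_mul_inr, map_add, hx, add_zero]
  · intro hmu
    obtain ⟨x, hx⟩ : mu - lam ∈ range B := by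
      rw [B.range_eq_dualAnnihilator_ker_flip, Submodule.mem_dualAnnihilator]
      intro w hw
      simp [hmu w fun y => by simpa [B] using LinearMap.congr_fun hw y]
    obtain ⟨N, -, hN⟩ := hnil
    obtain ⟨u, hu⟩ := isUnit_one_add_inr hN x
    refine ⟨(⟨u, (hG u).mpr ⟨x, hu⟩⟩ : Gsub)⁻¹, fun z => ?_⟩
    have hxz : lam (x * z) = mu z - lam z := LinearMap.congr_fun hx z
    rw [inv_inv, Subgroup.coe_mk, hu, snd_one_add_inr_mul_inr, map_add, hxz, add_sub_cancel]

/-- Let `𝔤 = A` be a finite-dimensional nilpotent associative (non-unital)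
algebra over a finite field `F` (= `F_q`) and `G = 1 + 𝔤` the associated algebra group
(realized as the subgroup `Gsub` of units of the unitization consisting of the elements
`1 + x`, `x ∈ A`).  For `λ ∈ 𝔤*` set `𝔩_λ = {x ∈ 𝔤 | λ(yx) = 0 for all y ∈ 𝔤}`.  Then the
left orbit `Gλ = {gλ | g ∈ G}`, where `(gλ)(x) = λ(g⁻¹x)`, equals
`{μ ∈ 𝔤* | μ(x) = λ(x) for all x ∈ 𝔩_λ}`. -/
theorem left_orbit_eq_functionals_agreeing_on_left_ideal
    {F A : Type*} [Field F] [Fintype F] [NonUnitalRing A] [Module F A]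
    [SMulCommClass F A A] [IsScalarTower F A A] [FiniteDimensional F A]
    (hnil : ∃ N : ℕ, 0 < N ∧
      ∀ g : Fin N → A, (List.ofFn fun i => (g i : Unitization F A)).prod = 0)
    (Gsub : Subgroup (Unitization F A)ˣ)
    (hG : ∀ g : (Unitization F A)ˣ, g ∈ Gsub ↔ ∃ x : A, (g : Unitization F A) = 1 + x)
    (lam : Module.Dual F A) :
    {mu : Module.Dual F A | ∃ g : Gsub, ∀ z : A,
        mu z = lam ((((g⁻¹ : Gsub) : (Unitization F A)ˣ) * (z : Unitization F A)).snd)} =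
      {mu : Module.Dual F A | ∀ x : A, (∀ y : A, lam (y * x) = 0) → mu x = lam x} :=
  left_orbit_eq_functionals_agreeing_on_left_ideal_general hnil Gsub hG lam
end

section
/- Let 𝔤 be a finite-dimensional nilpotent associative (non-unital) algebra over F_q, G = 1 + 𝔤 the associated algebra group, and λ ∈ 𝔤*. Set 𝔩_λ = {x ∈ 𝔤 | λ(yx) = 0 for all y ∈ 𝔤} and L_λ = 1 + 𝔩_λ. Then L_λ is a subgroup of G and the map L_λ → ℂ^× sending 1 + x to θ(λ(x)) is a group homomorphism (a linear character of L_λ). -/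
/-!
The set `𝔩_λ` is a left ideal of `𝔤`: it is an additive subgroup, and `λ(z(ax)) = λ((za)x)`.
Hence `x + y + xy ∈ 𝔩_λ` for `x, y ∈ 𝔩_λ`, and `λ(xy) = 0` makes `1 + x ↦ θ(λ x)` multiplicative.
Since `x` is nilpotent in the unitization, `1 + x` is invertible with inverse `1 + y`,
and `y = -(x + yx)` lies in the left ideal `𝔩_λ` because `x` does.
-/

theorem IsNilpotent.isQuasiregular {R : Type*} [Ring R] {x : R} (hx : IsNilpotent x) :
    IsQuasiregular x :=
  isQuasiregular_iff_isUnit.2 hx.isUnit_one_add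

namespace Unitization

variable {R A : Type*} [CommRing R] [NonUnitalRing A] [Module R A]
  [IsScalarTower R A A] [SMulCommClass R A A]

theorem isNilpotent_inr_of_forall_prod_eq_zero {N : ℕ}
    (h : ∀ g : Fin N → A, (List.ofFn fun i => (g i : Unitization R A)).prod = 0) (x : A) :
    IsNilpotent (x : Unitization R A) :=
  ⟨N, by simpa only [List.ofFn_const, List.prod_replicate] using h fun _ => x⟩

end Unitization

namespace Module.Dual

variable {R A : Type*} [CommRing R] [NonUnitalRing A] [Module R A] {lam : Module.Dual R A}
  {x y : A}

/-- The set `𝔩_λ` of the statement. -/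
def leftKer (lam : Module.Dual R A) : AddSubgroup A where
  carrier := {x | ∀ z, lam (z * x) = 0}
  add_mem' hx hy z := by simp only [mul_add, map_add, hx z, hy z, add_zero]
  zero_mem' z := by simp only [mul_zero, map_zero]
  neg_mem' hx z := by simp only [mul_neg, map_neg, hx z, neg_zero]

theorem mul_mem_leftKer (a : A) (hx : x ∈ lam.leftKer) : a * x ∈ lam.leftKer := fun z => by
  rw [← mul_assoc]
  exact hx (z * a)

theorem add_add_mul_mem_leftKer (hx : x ∈ lam.leftKer) (hy : y ∈ lam.leftKer) :
    x + y + x * y ∈ lam.leftKer :=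
  add_mem (add_mem hx hy) (mul_mem_leftKer x hy)

theorem mem_leftKer_of_add_add_mul_eq_zero (hx : x ∈ lam.leftKer) (h : y + x + y * x = 0) :
    y ∈ lam.leftKer := by
  rw [add_assoc, add_eq_zero_iff_eq_neg] at h
  rw [h]
  exact neg_mem (add_mem hx (mul_mem_leftKer y hx))

theorem apply_add_add_mul (hy : y ∈ lam.leftKer) : lam (x + y + x * y) = lam x + lam y := by
  rw [map_add, map_add, hy x, add_zero]

end Module.Dual

open Module.Dual

theorem one_add_left_ideal_subgroup_and_linear_character_general
    {F A : Type*} [Field F] [NonUnitalRing A] [Module F A]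
    [SMulCommClass F A A] [IsScalarTower F A A]
    (hnil : ∃ N : ℕ, 0 < N ∧
      ∀ g : Fin N → A, (List.ofFn fun i => (g i : Unitization F A)).prod = 0)
    (θ : AddChar F ℂ)
    (lam : Module.Dual F A) :
    (∀ x ∈ {x : A | ∀ y : A, lam (y * x) = 0},
      ∀ y ∈ {x : A | ∀ y : A, lam (y * x) = 0},
        x + y + x * y ∈ {x : A | ∀ y : A, lam (y * x) = 0}) ∧
    (∀ x ∈ {x : A | ∀ y : A, lam (y * x) = 0},
      ∃ y ∈ {x : A | ∀ y : A, lam (y * x) = 0},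
        x + y + x * y = 0 ∧ y + x + y * x = 0) ∧
    (∀ x ∈ {x : A | ∀ y : A, lam (y * x) = 0},
      ∀ y ∈ {x : A | ∀ y : A, lam (y * x) = 0},
        θ (lam (x + y + x * y)) = θ (lam x) * θ (lam y)) := by
  obtain ⟨N, -, hprod⟩ := hnil
  refine ⟨fun x hx y hy => add_add_mul_mem_leftKer hx hy, fun x hx => ?_,
    fun x _ y hy => by rw [apply_add_add_mul hy, AddChar.map_add_eq_mul]⟩
  have hquasi : IsQuasiregular x := (Unitization.isQuasiregular_inr_iff (R := F) x).1
    (Unitization.isNilpotent_inr_of_forall_prod_eq_zero hprod x).isQuasiregular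
  obtain ⟨y, hyx, hxy⟩ := isQuasiregular_iff.1 hquasi
  rw [add_comm x y] at hxy
  rw [add_comm y x] at hyx
  exact ⟨y, mem_leftKer_of_add_add_mul_eq_zero hx hxy, hyx, hxy⟩

/-- Let `𝔤 = A` be a finite-dimensional nilpotent associative (non-unital)
algebra over a finite field `F` (= `F_q`), with algebra group `G = 1 + 𝔤` (whose group law,
read in the coordinate `x` of `1 + x`, is `x ⋆ y = x + y + xy`).  For `λ ∈ 𝔤*` set
`𝔩_λ = {x ∈ 𝔤 | λ(yx) = 0 for all y ∈ 𝔤}` and `L_λ = 1 + 𝔩_λ`.  Then `L_λ` is a subgroup of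
`G` (it is closed under the group law and contains two-sided inverses) and the map
`1 + x ↦ θ(λ(x))` is a group homomorphism `L_λ → ℂ^×` (a linear character of `L_λ`). -/
theorem one_add_left_ideal_subgroup_and_linear_character
    {F A : Type*} [Field F] [Fintype F] [NonUnitalRing A] [Module F A]
    [SMulCommClass F A A] [IsScalarTower F A A] [FiniteDimensional F A]
    (hnil : ∃ N : ℕ, 0 < N ∧
      ∀ g : Fin N → A, (List.ofFn fun i => (g i : Unitization F A)).prod = 0)
    (θ : AddChar F ℂ) (hθ : ∃ a : F, θ a ≠ 1)
    (lam : Module.Dual F A) :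
    (∀ x ∈ {x : A | ∀ y : A, lam (y * x) = 0},
      ∀ y ∈ {x : A | ∀ y : A, lam (y * x) = 0},
        x + y + x * y ∈ {x : A | ∀ y : A, lam (y * x) = 0}) ∧
    (∀ x ∈ {x : A | ∀ y : A, lam (y * x) = 0},
      ∃ y ∈ {x : A | ∀ y : A, lam (y * x) = 0},
        x + y + x * y = 0 ∧ y + x + y * x = 0) ∧
    (∀ x ∈ {x : A | ∀ y : A, lam (y * x) = 0},
      ∀ y ∈ {x : A | ∀ y : A, lam (y * x) = 0},
        θ (lam (x + y + x * y)) = θ (lam x) * θ (lam y)) :=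
  one_add_left_ideal_subgroup_and_linear_character_general hnil θ lam
end

section
/- Let q be a power of an odd prime and let G = 1 + 𝔤 be a pattern subgroup of UT_n(F_{q^k}), regarded over F_q, with † an involutive F_q-algebra antiautomorphism of 𝔤 satisfying (α e_ij)† ∈ F_{q^k}^× e_{j̄ ī} for all α ∈ F_{q^k}^×. Let U = {u ∈ G | u† = u⁻¹}, 𝔲 = {x ∈ 𝔤 | x† = −x}, and let f be a Springer morphism. Then for all u, v ∈ U: f(v) ∈ G·f(u) if and only if (v − 1) ∈ G(u − 1)G. Consequently, the superclasses K_u = {v ∈ U | f(v) ∈ G·f(u)} of U are exactly the nonempty sets of the form U ∩ K_g, where K_g = {h ∈ G | h − 1 ∈ G(g − 1)G} is a superclass of G in the algebra group supercharacter theory. -/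
/-!
A Springer morphism factors as `f(1 + x) = x c` with `c = 1 + Σ aᵢ x^(i-1) ∈ G`, so
`f(v) ∈ G·f(u)` immediately gives `v - 1 ∈ G (u - 1) G`. Conversely, if `f(v) = a f(u) b`
with `a, b ∈ G`, applying `†` to this equation and using that `f(u), f(v)` are skew gives
`f(v) = b† f(u) a†`, so `m = a⁻¹ b†` satisfies `m f(u) = f(u) m†`. As `G` is a `p`-group with
`p` odd, `m` has a square root `s` that is a power of `m`; then also `s f(u) = f(u) s†`, whence
`f(v) = (a s) f(u) (a s)†`. The description of the superclasses follows because the sets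
`G x G` partition the matrices.
-/

open Matrix

section PatternGroups

variable (F : Type) [Field F] (E : Type) [Field E] [Algebra F E] {n : ℕ}

/-- The pattern subalgebra `𝔤 ⊆ 𝔲𝔱_n(E)` of matrices supported on the set `S` of strict
relations `i ≺ j` of a subposet of the usual linear order on `[n]`. -/
def patAlg (S : Set (Fin n × Fin n)) : Set (Matrix (Fin n) (Fin n) E) :=
  {x | ∀ i j : Fin n, (i, j) ∉ S → x i j = 0}

/-- The pattern subgroup `G = 1 + 𝔤`. -/
def patGrp (S : Set (Fin n × Fin n)) : Set (Matrix (Fin n) (Fin n) E) :=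
  {g | ∃ x ∈ patAlg E S, g = 1 + x}

/-- The two-sided ideal `𝔥 = {x ∈ 𝔤 | x_{ij} = 0 if j ≤ n/2}` (indices read 1-based). -/
def patHAlg (S : Set (Fin n × Fin n)) : Set (Matrix (Fin n) (Fin n) E) :=
  {x | x ∈ patAlg E S ∧ ∀ i j : Fin n, (j : ℕ) + 1 ≤ n / 2 → x i j = 0}

/-- The normal subgroup `H = 1 + 𝔥` of `G`. -/
def patHGrp (S : Set (Fin n × Fin n)) : Set (Matrix (Fin n) (Fin n) E) :=
  {g | ∃ x ∈ patHAlg E S, g = 1 + x}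

/-- The extension of `†` from `𝔤` to `G = 1 + 𝔤`: `(1+x)† = 1 + x†`. -/
def dagGrp (dag : Matrix (Fin n) (Fin n) E → Matrix (Fin n) (Fin n) E)
    (g : Matrix (Fin n) (Fin n) E) : Matrix (Fin n) (Fin n) E :=
  1 + dag (g - 1)

/-- The subgroup `U = {u ∈ G | u† = u⁻¹}` of the pattern group `G`. -/
def patUGrp (S : Set (Fin n × Fin n))
    (dag : Matrix (Fin n) (Fin n) E → Matrix (Fin n) (Fin n) E) :
    Set (Matrix (Fin n) (Fin n) E) :=
  {u | u ∈ patGrp E S ∧ u * dagGrp E dag u = 1 ∧ dagGrp E dag u * u = 1}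

/-- The set `𝔲 = {x ∈ 𝔤 | x† = -x}`. -/
def patUAlg (S : Set (Fin n × Fin n))
    (dag : Matrix (Fin n) (Fin n) E → Matrix (Fin n) (Fin n) E) :
    Set (Matrix (Fin n) (Fin n) E) :=
  {x | x ∈ patAlg E S ∧ dag x = -x}

/-- `†` is an involutive `F`-algebra antiautomorphism of the pattern algebra `𝔤` sending
each `α e_{ij}` (`α ∈ E^×`) into `E^× e_{\bar j \bar i}`, where `\bar i = n + 1 - i`. -/
structure IsPatternAntiInvolution (S : Set (Fin n × Fin n))
    (dag : Matrix (Fin n) (Fin n) E → Matrix (Fin n) (Fin n) E) : Prop where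
  map_mem : ∀ x ∈ patAlg E S, dag x ∈ patAlg E S
  map_add : ∀ x ∈ patAlg E S, ∀ y ∈ patAlg E S, dag (x + y) = dag x + dag y
  map_smul : ∀ (c : F), ∀ x ∈ patAlg E S,
    dag (algebraMap F E c • x) = algebraMap F E c • dag x
  map_mul : ∀ x ∈ patAlg E S, ∀ y ∈ patAlg E S, dag (x * y) = dag y * dag x
  invol : ∀ x ∈ patAlg E S, dag (dag x) = x
  elementary : ∀ i j : Fin n, (i, j) ∈ S → ∀ α : E, α ≠ 0 →
    ∃ β : E, β ≠ 0 ∧ dag (Matrix.single i j α) = Matrix.single j.rev i.rev β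

/-- A Springer morphism: a bijection `f : G → 𝔤` with `f(U) = 𝔲` and
`f(1+x) = x + Σ_{i ≥ 2} a_i x^i` with coefficients `a_i ∈ F`. -/
def IsSpringerMorphism (S : Set (Fin n × Fin n))
    (dag f : Matrix (Fin n) (Fin n) E → Matrix (Fin n) (Fin n) E) : Prop :=
  Set.BijOn f (patGrp E S) (patAlg E S) ∧
  f '' patUGrp E S dag = patUAlg E S dag ∧
  ∃ (N : ℕ) (a : ℕ → F), a 1 = 1 ∧
    ∀ x ∈ patAlg E S, f (1 + x) = ∑ i ∈ Finset.Ico 1 N, algebraMap F E (a i) • x ^ i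

/-- The orbit `G · w = {g w g† | g ∈ G}` of `w` under the action `g · x = g x g†`. -/
def patGrpDot (S : Set (Fin n × Fin n))
    (dag : Matrix (Fin n) (Fin n) E → Matrix (Fin n) (Fin n) E)
    (w : Matrix (Fin n) (Fin n) E) : Set (Matrix (Fin n) (Fin n) E) :=
  {z | ∃ g ∈ patGrp E S, z = g * w * dagGrp E dag g}

end PatternGroups

section Supercharacters

variable (F : Type) [Field F] (E : Type) [Field E] [Algebra F E] {n : ℕ}

/-- The orbit of `λ ∈ 𝔲*` under a subset `T ⊆ G` (for `T = G` or `T = H`), acting by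
`(g·λ)(x) = λ(g⁻¹ · x) = λ(g⁻¹ x (g⁻¹)†)`.  An element `λ ∈ 𝔲*` is recorded as a function
`𝔲 → F` (here represented via a functional `lam` on the full matrix space: only its values
on `𝔲` matter). -/
def patDualOrbit (S : Set (Fin n × Fin n))
    (dag : Matrix (Fin n) (Fin n) E → Matrix (Fin n) (Fin n) E)
    (T : Set (Matrix (Fin n) (Fin n) E))
    (lam : Module.Dual F (Matrix (Fin n) (Fin n) E)) :
    Set (↥(patUAlg E S dag) → F) :=
  {ψ | ∃ g ∈ T, ∀ x : ↥(patUAlg E S dag),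
    ψ x = lam (g⁻¹ * (x : Matrix (Fin n) (Fin n) E) * dagGrp E dag g⁻¹)}

/-- The supercharacter `χ_λ = (|H·λ|/|G·λ|) Σ_{μ ∈ G·λ} θ ∘ μ ∘ f` of `U`, for `λ ∈ 𝔲*`. -/
noncomputable def patSupchar (S : Set (Fin n × Fin n))
    (dag f : Matrix (Fin n) (Fin n) E → Matrix (Fin n) (Fin n) E)
    (θ : AddChar F ℂ) (lam : Module.Dual F (Matrix (Fin n) (Fin n) E))
    (u : Matrix (Fin n) (Fin n) E) : ℂ :=
  (Nat.card (patDualOrbit F E S dag (patHGrp E S) lam) : ℂ) /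
    (Nat.card (patDualOrbit F E S dag (patGrp E S) lam) : ℂ) *
    ∑ᶠ ψ ∈ patDualOrbit F E S dag (patGrp E S) lam,
      @dite ℂ (f u ∈ patUAlg E S dag) (Classical.propDecidable _)
        (fun h => θ (ψ ⟨f u, h⟩)) (fun _ => 0)

/-- The superclass `K_u = {v ∈ U | f(v) ∈ G · f(u)}` of `u`, as a subset of the ambient
matrix space. -/
def patSupclass (S : Set (Fin n × Fin n))
    (dag f : Matrix (Fin n) (Fin n) E → Matrix (Fin n) (Fin n) E)
    (u : Matrix (Fin n) (Fin n) E) : Set (Matrix (Fin n) (Fin n) E) :=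
  {v | v ∈ patUGrp E S dag ∧ f v ∈ patGrpDot E S dag (f u)}

end Supercharacters

section PatternAlgebra

variable {E : Type} [Field E] {n : ℕ} {S : Set (Fin n × Fin n)}
  {x y : Matrix (Fin n) (Fin n) E}

lemma zero_mem_patAlg : (0 : Matrix (Fin n) (Fin n) E) ∈ patAlg E S :=
  fun _ _ _ => rfl

lemma add_mem_patAlg (hx : x ∈ patAlg E S) (hy : y ∈ patAlg E S) : x + y ∈ patAlg E S :=
  fun i j h => by simp [hx i j h, hy i j h]

lemma neg_mem_patAlg (hx : x ∈ patAlg E S) : -x ∈ patAlg E S :=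
  fun i j h => by simp [hx i j h]

lemma smul_mem_patAlg (c : E) (hx : x ∈ patAlg E S) : c • x ∈ patAlg E S :=
  fun i j h => by simp [hx i j h]

lemma sum_mem_patAlg {ι : Type*} (s : Finset ι) {g : ι → Matrix (Fin n) (Fin n) E}
    (hg : ∀ k ∈ s, g k ∈ patAlg E S) : ∑ k ∈ s, g k ∈ patAlg E S :=
  fun i j h => by
    rw [Matrix.sum_apply]
    exact Finset.sum_eq_zero fun k hk => hg k hk i j h

lemma mul_mem_patAlg (htrans : ∀ i j k : Fin n, (i, j) ∈ S → (j, k) ∈ S → (i, k) ∈ S)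
    (hx : x ∈ patAlg E S) (hy : y ∈ patAlg E S) : x * y ∈ patAlg E S := by
  intro i j hij
  rw [Matrix.mul_apply]
  refine Finset.sum_eq_zero fun k _ => ?_
  by_cases hik : (i, k) ∈ S
  · have hkj : (k, j) ∉ S := fun hkj => hij (htrans i k j hik hkj)
    simp [hy k j hkj]
  · simp [hx i k hik]

lemma pow_succ_mem_patAlg
    (htrans : ∀ i j k : Fin n, (i, j) ∈ S → (j, k) ∈ S → (i, k) ∈ S)
    (hx : x ∈ patAlg E S) (m : ℕ) : x ^ (m + 1) ∈ patAlg E S := by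
  induction m with
  | zero => simpa using hx
  | succ m ih => exact pow_succ x (m + 1) ▸ mul_mem_patAlg htrans ih hx

lemma pow_apply_eq_zero_of_mem_patAlg (hlt : ∀ q ∈ S, q.1 < q.2) (hx : x ∈ patAlg E S)
    (m : ℕ) (i j : Fin n) (hij : (j : ℕ) < i + m) : (x ^ m) i j = 0 := by
  induction m generalizing j with
  | zero =>
    have : i ≠ j := fun h => by subst h; omega
    simp [this]
  | succ m ih =>
    rw [pow_succ, Matrix.mul_apply]
    refine Finset.sum_eq_zero fun k _ => ?_
    by_cases hkj : (j : ℕ) < k + 1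
    · have : (k, j) ∉ S := fun h => by have := hlt _ h; simp only at this; omega
      simp [hx k j this]
    · simp [ih k (by omega)]

lemma pow_eq_zero_of_mem_patAlg (hlt : ∀ q ∈ S, q.1 < q.2) (hx : x ∈ patAlg E S) :
    x ^ n = 0 := by
  ext i j
  exact pow_apply_eq_zero_of_mem_patAlg hlt hx n i j (by omega)

end PatternAlgebra

section PatternGroup

variable {E : Type} [Field E] {n : ℕ} {S : Set (Fin n × Fin n)}
  {g h x : Matrix (Fin n) (Fin n) E}

lemma one_mem_patGrp : (1 : Matrix (Fin n) (Fin n) E) ∈ patGrp E S :=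
  ⟨0, zero_mem_patAlg, (add_zero 1).symm⟩

lemma mul_mem_patGrp (htrans : ∀ i j k : Fin n, (i, j) ∈ S → (j, k) ∈ S → (i, k) ∈ S)
    (hg : g ∈ patGrp E S) (hh : h ∈ patGrp E S) : g * h ∈ patGrp E S := by
  obtain ⟨x, hx, rfl⟩ := hg
  obtain ⟨y, hy, rfl⟩ := hh
  exact ⟨x + y + x * y, add_mem_patAlg (add_mem_patAlg hx hy) (mul_mem_patAlg htrans hx hy),
    by noncomm_ring⟩

lemma pow_mem_patGrp (htrans : ∀ i j k : Fin n, (i, j) ∈ S → (j, k) ∈ S → (i, k) ∈ S)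
    (hg : g ∈ patGrp E S) (m : ℕ) : g ^ m ∈ patGrp E S := by
  induction m with
  | zero => exact (pow_zero g).symm ▸ one_mem_patGrp
  | succ m ih => exact pow_succ g m ▸ mul_mem_patGrp htrans ih hg

lemma patGrp_mul_mem_patAlg
    (htrans : ∀ i j k : Fin n, (i, j) ∈ S → (j, k) ∈ S → (i, k) ∈ S)
    (hg : g ∈ patGrp E S) (hx : x ∈ patAlg E S) : g * x ∈ patAlg E S := by
  obtain ⟨s, hs, rfl⟩ := hg
  rw [add_mul, one_mul]
  exact add_mem_patAlg hx (mul_mem_patAlg htrans hs hx)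

lemma exists_mul_eq_one_of_mem_patGrp (hlt : ∀ q ∈ S, q.1 < q.2)
    (htrans : ∀ i j k : Fin n, (i, j) ∈ S → (j, k) ∈ S → (i, k) ∈ S)
    (hg : g ∈ patGrp E S) : ∃ h ∈ patGrp E S, h * g = 1 := by
  obtain ⟨t, ht, rfl⟩ := hg
  have hnil : (-t) ^ (n + 1) = 0 :=
    pow_eq_zero_of_le n.le_succ (pow_eq_zero_of_mem_patAlg hlt (neg_mem_patAlg ht))
  refine ⟨∑ i ∈ Finset.range (n + 1), (-t) ^ i, ?_, ?_⟩
  · refine ⟨∑ i ∈ Finset.range n, (-t) ^ (i + 1),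
      sum_mem_patAlg _ fun i _ => pow_succ_mem_patAlg htrans (neg_mem_patAlg ht) i, ?_⟩
    rw [Finset.sum_range_succ', pow_zero, add_comm]
  · simpa [hnil] using geom_sum_mul_neg (-t) (n + 1)

lemma inv_mem_patGrp (hlt : ∀ q ∈ S, q.1 < q.2)
    (htrans : ∀ i j k : Fin n, (i, j) ∈ S → (j, k) ∈ S → (i, k) ∈ S)
    (hg : g ∈ patGrp E S) : g⁻¹ ∈ patGrp E S := by
  obtain ⟨h, hh, hhg⟩ := exists_mul_eq_one_of_mem_patGrp hlt htrans hg
  rwa [Matrix.inv_eq_left_inv hhg]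

lemma inv_mul_of_mem_patGrp (hlt : ∀ q ∈ S, q.1 < q.2)
    (htrans : ∀ i j k : Fin n, (i, j) ∈ S → (j, k) ∈ S → (i, k) ∈ S)
    (hg : g ∈ patGrp E S) : g⁻¹ * g = 1 := by
  obtain ⟨h, -, hhg⟩ := exists_mul_eq_one_of_mem_patGrp hlt htrans hg
  rwa [Matrix.inv_eq_left_inv hhg]

lemma mul_inv_of_mem_patGrp (hlt : ∀ q ∈ S, q.1 < q.2)
    (htrans : ∀ i j k : Fin n, (i, j) ∈ S → (j, k) ∈ S → (i, k) ∈ S)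
    (hg : g ∈ patGrp E S) : g * g⁻¹ = 1 :=
  mul_eq_one_comm.mp (inv_mul_of_mem_patGrp hlt htrans hg)

end PatternGroup

section Dagger

variable {F : Type} [Field F] {E : Type} [Field E] [Algebra F E] {n : ℕ}
  {S : Set (Fin n × Fin n)} {dag : Matrix (Fin n) (Fin n) E → Matrix (Fin n) (Fin n) E}
  {g h x : Matrix (Fin n) (Fin n) E}

lemma dagGrp_one_add : dagGrp E dag (1 + x) = 1 + dag x := by
  rw [dagGrp, add_sub_cancel_left]

lemma dagGrp_one (hdag : IsPatternAntiInvolution F E S dag) :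
    dagGrp E dag (1 : Matrix (Fin n) (Fin n) E) = 1 := by
  have h := hdag.map_add 0 zero_mem_patAlg 0 zero_mem_patAlg
  rw [add_zero, left_eq_add] at h
  rw [dagGrp, sub_self, h, add_zero]

lemma dagGrp_mem_patGrp (hdag : IsPatternAntiInvolution F E S dag) (hg : g ∈ patGrp E S) :
    dagGrp E dag g ∈ patGrp E S := by
  obtain ⟨x, hx, rfl⟩ := hg
  exact ⟨dag x, hdag.map_mem x hx, dagGrp_one_add⟩

lemma dagGrp_dagGrp (hdag : IsPatternAntiInvolution F E S dag) (hg : g ∈ patGrp E S) :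
    dagGrp E dag (dagGrp E dag g) = g := by
  obtain ⟨x, hx, rfl⟩ := hg
  rw [dagGrp_one_add, dagGrp_one_add, hdag.invol x hx]

lemma dagGrp_mul (htrans : ∀ i j k : Fin n, (i, j) ∈ S → (j, k) ∈ S → (i, k) ∈ S)
    (hdag : IsPatternAntiInvolution F E S dag) (hg : g ∈ patGrp E S) (hh : h ∈ patGrp E S) :
    dagGrp E dag (g * h) = dagGrp E dag h * dagGrp E dag g := by
  obtain ⟨x, hx, rfl⟩ := hg
  obtain ⟨y, hy, rfl⟩ := hh
  have hxy : (1 + x) * (1 + y) = 1 + (x + y + x * y) := by noncomm_ring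
  rw [hxy, dagGrp_one_add, dagGrp_one_add, dagGrp_one_add,
    hdag.map_add _ (add_mem_patAlg hx hy) _ (mul_mem_patAlg htrans hx hy),
    hdag.map_add _ hx _ hy, hdag.map_mul _ hx _ hy]
  noncomm_ring

lemma dagGrp_pow (htrans : ∀ i j k : Fin n, (i, j) ∈ S → (j, k) ∈ S → (i, k) ∈ S)
    (hdag : IsPatternAntiInvolution F E S dag) (hg : g ∈ patGrp E S) (m : ℕ) :
    dagGrp E dag (g ^ m) = dagGrp E dag g ^ m := by
  induction m with
  | zero => rw [pow_zero, pow_zero, dagGrp_one hdag]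
  | succ m ih =>
    rw [pow_succ, dagGrp_mul htrans hdag (pow_mem_patGrp htrans hg m) hg, ih, pow_succ']

lemma dag_mul_left (htrans : ∀ i j k : Fin n, (i, j) ∈ S → (j, k) ∈ S → (i, k) ∈ S)
    (hdag : IsPatternAntiInvolution F E S dag) (hg : g ∈ patGrp E S) (hx : x ∈ patAlg E S) :
    dag (g * x) = dag x * dagGrp E dag g := by
  obtain ⟨s, hs, rfl⟩ := hg
  rw [add_mul, one_mul, hdag.map_add _ hx _ (mul_mem_patAlg htrans hs hx),
    hdag.map_mul _ hs _ hx, dagGrp_one_add, mul_add, mul_one]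

lemma dag_mul_right (htrans : ∀ i j k : Fin n, (i, j) ∈ S → (j, k) ∈ S → (i, k) ∈ S)
    (hdag : IsPatternAntiInvolution F E S dag) (hg : g ∈ patGrp E S) (hx : x ∈ patAlg E S) :
    dag (x * g) = dagGrp E dag g * dag x := by
  obtain ⟨s, hs, rfl⟩ := hg
  rw [mul_add, mul_one, hdag.map_add _ hx _ (mul_mem_patAlg htrans hx hs),
    hdag.map_mul _ hx _ hs, dagGrp_one_add, add_mul, one_mul]

end Dagger

section Springer

variable {F : Type} [Field F] {E : Type} [Field E] [Algebra F E] {n : ℕ}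
  {S : Set (Fin n × Fin n)} {dag f : Matrix (Fin n) (Fin n) E → Matrix (Fin n) (Fin n) E}
  {g : Matrix (Fin n) (Fin n) E}

lemma IsSpringerMorphism.mem_patUAlg (hf : IsSpringerMorphism F E S dag f)
    (hg : g ∈ patUGrp E S dag) : f g ∈ patUAlg E S dag :=
  hf.2.1 ▸ Set.mem_image_of_mem f hg

lemma IsSpringerMorphism.exists_apply_eq_sub_one_mul (hf : IsSpringerMorphism F E S dag f)
    (htrans : ∀ i j k : Fin n, (i, j) ∈ S → (j, k) ∈ S → (i, k) ∈ S)
    (hg : g ∈ patGrp E S) : ∃ c ∈ patGrp E S, f g = (g - 1) * c := by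
  obtain ⟨hbij, -, N, a, ha1, hfa⟩ := hf
  obtain ⟨x, hx, rfl⟩ := hg
  refine ⟨1 + ∑ i ∈ Finset.Ico 2 N, algebraMap F E (a i) • x ^ (i - 1),
    ⟨_, sum_mem_patAlg _ fun i hi => smul_mem_patAlg _ ?_, rfl⟩, ?_⟩
  · obtain ⟨m, hm⟩ : ∃ m, i - 1 = m + 1 := ⟨i - 2, by grind⟩
    exact hm ▸ pow_succ_mem_patAlg htrans hx m
  rw [add_sub_cancel_left]
  rcases lt_or_ge N 2 with hN | hN
  · -- `f` vanishes on `G`, so injectivity forces `𝔤 = 0`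
    have hf0 : ∀ y ∈ patAlg E S, f (1 + y) = 0 := fun y hy => by
      rw [hfa y hy, Finset.Ico_eq_empty (by omega), Finset.sum_empty]
    have hx0 : 1 + x = 1 + 0 := hbij.injOn ⟨x, hx, rfl⟩ ⟨0, zero_mem_patAlg, rfl⟩
      (by rw [hf0 x hx, hf0 0 zero_mem_patAlg])
    rw [add_left_cancel hx0, hf0 0 zero_mem_patAlg, zero_mul]
  · rw [hfa x hx, Finset.sum_eq_sum_Ico_succ_bot (by omega), ha1, map_one, one_smul, pow_one,
      mul_add, mul_one, Finset.mul_sum]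
    refine congrArg _ (Finset.sum_congr rfl fun i hi => ?_)
    rw [mul_smul_comm, ← pow_succ', Nat.sub_add_cancel (by grind)]

end Springer

lemma one_add_pow_char_pow {R A : Type*} [CommSemiring R] [Semiring A] [Algebra R A]
    (p : ℕ) [Fact p.Prime] [CharP R p] (t : A) (k : ℕ) :
    (1 + t) ^ p ^ k = 1 + t ^ p ^ k := by
  simpa using congrArg (Polynomial.aeval t) (add_pow_char_pow (1 : Polynomial R) Polynomial.X p k)

section Unipotent

variable {E : Type} [Field E] {n : ℕ} {S : Set (Fin n × Fin n)} {g : Matrix (Fin n) (Fin n) E}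

lemma pow_char_pow_eq_one_of_mem_patGrp (p : ℕ) [Fact p.Prime] [CharP E p]
    (hlt : ∀ q ∈ S, q.1 < q.2) (hg : g ∈ patGrp E S) : g ^ p ^ n = 1 := by
  obtain ⟨t, ht, rfl⟩ := hg
  have hn : n ≤ p ^ n := (Nat.lt_pow_self (Fact.out : p.Prime).one_lt).le
  rw [one_add_pow_char_pow (R := E) p, pow_eq_zero_of_le hn (pow_eq_zero_of_mem_patAlg hlt ht),
    add_zero]

lemma exists_pow_sq_eq_of_mem_patGrp (p : ℕ) [Fact p.Prime] [CharP E p] (hp : p ≠ 2)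
    (hlt : ∀ q ∈ S, q.1 < q.2) (hg : g ∈ patGrp E S) : ∃ r : ℕ, (g ^ r) ^ 2 = g := by
  have hodd : Odd (orderOf g) := ((Fact.out : p.Prime).odd_of_ne_two hp).pow.of_dvd_nat
    (orderOf_dvd_of_pow_eq_one (pow_char_pow_eq_one_of_mem_patGrp p hlt hg))
  obtain ⟨r, hr⟩ := exists_pow_eq_self_of_coprime (Nat.coprime_two_left.mpr hodd)
  exact ⟨r, by rw [← pow_mul, mul_comm, pow_mul, hr]⟩

end Unipotent

section Orbits

variable {F : Type} [Field F] {E : Type} [Field E] [Algebra F E] {n : ℕ}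
  {S : Set (Fin n × Fin n)} {dag f : Matrix (Fin n) (Fin n) E → Matrix (Fin n) (Fin n) E}
  {a b x y u v : Matrix (Fin n) (Fin n) E}

lemma mem_patGrpDot_of_eq_mul_mul (p : ℕ) [Fact p.Prime] [CharP E p] (hp : p ≠ 2)
    (hlt : ∀ q ∈ S, q.1 < q.2)
    (htrans : ∀ i j k : Fin n, (i, j) ∈ S → (j, k) ∈ S → (i, k) ∈ S)
    (hdag : IsPatternAntiInvolution F E S dag)
    (hx : x ∈ patUAlg E S dag) (hy : y ∈ patUAlg E S dag)
    (ha : a ∈ patGrp E S) (hb : b ∈ patGrp E S) (hxy : y = a * x * b) :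
    y ∈ patGrpDot E S dag x := by
  have hxy' : y = dagGrp E dag b * x * dagGrp E dag a := by
    have h := congrArg dag hxy
    rw [hy.2, dag_mul_right htrans hdag hb (patGrp_mul_mem_patAlg htrans ha hx.1),
      dag_mul_left htrans hdag ha hx.1, hx.2, neg_mul, mul_neg, neg_inj] at h
    rw [h, mul_assoc]
  have ha' : a⁻¹ ∈ patGrp E S := inv_mem_patGrp hlt htrans ha
  have hdag_inv_mul : dagGrp E dag a * dagGrp E dag a⁻¹ = 1 := by
    rw [← dagGrp_mul htrans hdag ha' ha, inv_mul_of_mem_patGrp hlt htrans ha, dagGrp_one hdag]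
  have hdag_mul_inv : dagGrp E dag a⁻¹ * dagGrp E dag a = 1 := by
    rw [← dagGrp_mul htrans hdag ha ha', mul_inv_of_mem_patGrp hlt htrans ha, dagGrp_one hdag]
  set m := a⁻¹ * dagGrp E dag b with hm_def
  have hm : m ∈ patGrp E S := mul_mem_patGrp htrans ha' (dagGrp_mem_patGrp hdag hb)
  have hmx : m * x = a⁻¹ * y * dagGrp E dag a⁻¹ := by
    calc m * x = a⁻¹ * dagGrp E dag b * x * (dagGrp E dag a * dagGrp E dag a⁻¹) := by
          rw [hdag_inv_mul, mul_one]
      _ = a⁻¹ * y * dagGrp E dag a⁻¹ := by rw [hxy']; simp only [mul_assoc]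
  have hxm : x * dagGrp E dag m = a⁻¹ * y * dagGrp E dag a⁻¹ := by
    rw [hm_def, dagGrp_mul htrans hdag ha' (dagGrp_mem_patGrp hdag hb), dagGrp_dagGrp hdag hb]
    calc x * (b * dagGrp E dag a⁻¹) = a⁻¹ * a * x * (b * dagGrp E dag a⁻¹) := by
          rw [inv_mul_of_mem_patGrp hlt htrans ha, one_mul]
      _ = a⁻¹ * y * dagGrp E dag a⁻¹ := by rw [hxy]; simp only [mul_assoc]
  obtain ⟨r, hr⟩ := exists_pow_sq_eq_of_mem_patGrp p hp hlt hm
  have hmr : m ^ r ∈ patGrp E S := pow_mem_patGrp htrans hm r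
  have hmrx : m ^ r * x = x * dagGrp E dag (m ^ r) := by
    rw [dagGrp_pow htrans hdag hm]
    exact (SemiconjBy.pow_right (hxm.trans hmx.symm) r).symm
  refine ⟨a * m ^ r, mul_mem_patGrp htrans ha hmr, ?_⟩
  rw [dagGrp_mul htrans hdag ha hmr]
  calc y = a * a⁻¹ * y * (dagGrp E dag a⁻¹ * dagGrp E dag a) := by
        rw [mul_inv_of_mem_patGrp hlt htrans ha, hdag_mul_inv, one_mul, mul_one]
    _ = a * ((m ^ r) ^ 2 * x) * dagGrp E dag a := by rw [hr, hmx]; simp only [mul_assoc]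
    _ = a * m ^ r * x * (dagGrp E dag (m ^ r) * dagGrp E dag a) := by
        rw [sq, mul_assoc (m ^ r), hmrx]; simp only [mul_assoc]

def patDoubleCoset (E : Type) [Field E] {n : ℕ} (S : Set (Fin n × Fin n))
    (x : Matrix (Fin n) (Fin n) E) : Set (Matrix (Fin n) (Fin n) E) :=
  {y | ∃ a ∈ patGrp E S, ∃ b ∈ patGrp E S, y = a * x * b}

lemma patDoubleCoset_eq_of_mem (hlt : ∀ q ∈ S, q.1 < q.2)
    (htrans : ∀ i j k : Fin n, (i, j) ∈ S → (j, k) ∈ S → (i, k) ∈ S)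
    (hy : y ∈ patDoubleCoset E S x) : patDoubleCoset E S y = patDoubleCoset E S x := by
  obtain ⟨a, ha, b, hb, rfl⟩ := hy
  ext z
  constructor
  · rintro ⟨c, hc, d, hd, rfl⟩
    exact ⟨c * a, mul_mem_patGrp htrans hc ha, b * d, mul_mem_patGrp htrans hb hd,
      by simp only [mul_assoc]⟩
  · rintro ⟨c, hc, d, hd, rfl⟩
    refine ⟨c * a⁻¹, mul_mem_patGrp htrans hc (inv_mem_patGrp hlt htrans ha),
      b⁻¹ * d, mul_mem_patGrp htrans (inv_mem_patGrp hlt htrans hb) hd, ?_⟩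
    calc c * x * d = c * (a⁻¹ * a) * x * (b * b⁻¹) * d := by
          rw [inv_mul_of_mem_patGrp hlt htrans ha, mul_inv_of_mem_patGrp hlt htrans hb,
            mul_one, mul_one]
      _ = c * a⁻¹ * (a * x * b) * (b⁻¹ * d) := by simp only [mul_assoc]

lemma IsSpringerMorphism.mem_patGrpDot_iff (hf : IsSpringerMorphism F E S dag f)
    (p : ℕ) [Fact p.Prime] [CharP E p] (hp : p ≠ 2) (hlt : ∀ q ∈ S, q.1 < q.2)
    (htrans : ∀ i j k : Fin n, (i, j) ∈ S → (j, k) ∈ S → (i, k) ∈ S)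
    (hdag : IsPatternAntiInvolution F E S dag)
    (hu : u ∈ patUGrp E S dag) (hv : v ∈ patUGrp E S dag) :
    f v ∈ patGrpDot E S dag (f u) ↔ v - 1 ∈ patDoubleCoset E S (u - 1) := by
  obtain ⟨cu, hcu, hfu⟩ := hf.exists_apply_eq_sub_one_mul htrans hu.1
  obtain ⟨cv, hcv, hfv⟩ := hf.exists_apply_eq_sub_one_mul htrans hv.1
  constructor
  · rintro ⟨g, hg, hfvu⟩
    refine ⟨g, hg, cu * dagGrp E dag g * cv⁻¹, mul_mem_patGrp htrans
      (mul_mem_patGrp htrans hcu (dagGrp_mem_patGrp hdag hg)) (inv_mem_patGrp hlt htrans hcv), ?_⟩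
    calc v - 1 = f v * cv⁻¹ := by
          rw [hfv, mul_assoc, mul_inv_of_mem_patGrp hlt htrans hcv, mul_one]
      _ = g * (u - 1) * (cu * dagGrp E dag g * cv⁻¹) := by
          rw [hfvu, hfu]; simp only [mul_assoc]
  · rintro ⟨a, ha, b, hb, hab⟩
    refine mem_patGrpDot_of_eq_mul_mul p hp hlt htrans hdag (hf.mem_patUAlg hu)
      (hf.mem_patUAlg hv) ha (b := cu⁻¹ * b * cv)
      (mul_mem_patGrp htrans (mul_mem_patGrp htrans (inv_mem_patGrp hlt htrans hcu) hb) hcv) ?_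
    calc f v = a * (u - 1) * (cu * cu⁻¹) * b * cv := by
          rw [hfv, hab, mul_inv_of_mem_patGrp hlt htrans hcu, mul_one]
      _ = a * f u * (cu⁻¹ * b * cv) := by rw [hfu]; simp only [mul_assoc]

lemma IsSpringerMorphism.patSupclass_eq (hf : IsSpringerMorphism F E S dag f)
    (p : ℕ) [Fact p.Prime] [CharP E p] (hp : p ≠ 2) (hlt : ∀ q ∈ S, q.1 < q.2)
    (htrans : ∀ i j k : Fin n, (i, j) ∈ S → (j, k) ∈ S → (i, k) ∈ S)
    (hdag : IsPatternAntiInvolution F E S dag) (hu : u ∈ patUGrp E S dag) :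
    patSupclass E S dag f u =
      patUGrp E S dag ∩ {h | h ∈ patGrp E S ∧ h - 1 ∈ patDoubleCoset E S (u - 1)} := by
  ext v
  exact and_congr_right fun hv =>
    (hf.mem_patGrpDot_iff p hp hlt htrans hdag hu hv).trans (and_iff_right hv.1).symm

end Orbits

theorem pattern_superclasses_eq_intersections_general
    (F : Type) [Field F] [Fintype F] (E : Type) [Field E] [Algebra F E]
    (hodd : ringChar F ≠ 2)
    {n : ℕ} (S : Set (Fin n × Fin n))
    (hS1 : ∀ p ∈ S, p.1 < p.2)
    (hS2 : ∀ i j k : Fin n, (i, j) ∈ S → (j, k) ∈ S → (i, k) ∈ S)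
    (dag : Matrix (Fin n) (Fin n) E → Matrix (Fin n) (Fin n) E)
    (hdag : IsPatternAntiInvolution F E S dag)
    (f : Matrix (Fin n) (Fin n) E → Matrix (Fin n) (Fin n) E)
    (hf : IsSpringerMorphism F E S dag f) :
    -- the key equivalence
    (∀ u ∈ patUGrp E S dag, ∀ v ∈ patUGrp E S dag,
      (f v ∈ patGrpDot E S dag (f u) ↔
        ∃ a ∈ patGrp E S, ∃ b ∈ patGrp E S, v - 1 = a * (u - 1) * b)) ∧
    -- every superclass of U is of the form U ∩ K_g
    (∀ u ∈ patUGrp E S dag, ∃ g ∈ patGrp E S,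
      patSupclass E S dag f u =
        patUGrp E S dag ∩
          {h | h ∈ patGrp E S ∧ ∃ a ∈ patGrp E S, ∃ b ∈ patGrp E S,
            h - 1 = a * (g - 1) * b}) ∧
    -- every nonempty set of the form U ∩ K_g is a superclass of U
    (∀ g ∈ patGrp E S,
      (patUGrp E S dag ∩
        {h | h ∈ patGrp E S ∧ ∃ a ∈ patGrp E S, ∃ b ∈ patGrp E S,
          h - 1 = a * (g - 1) * b}).Nonempty →
      ∃ u ∈ patUGrp E S dag,
        patUGrp E S dag ∩
          {h | h ∈ patGrp E S ∧ ∃ a ∈ patGrp E S, ∃ b ∈ patGrp E S,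
            h - 1 = a * (g - 1) * b} =
          patSupclass E S dag f u) := by
  have : Fact (ringChar F).Prime := ⟨CharP.char_is_prime F _⟩
  have : CharP E (ringChar F) := charP_of_injective_algebraMap (algebraMap F E).injective _
  have hsup := fun u (hu : u ∈ patUGrp E S dag) => hf.patSupclass_eq _ hodd hS1 hS2 hdag hu
  refine ⟨fun u hu v hv => hf.mem_patGrpDot_iff _ hodd hS1 hS2 hdag hu hv,
    fun u hu => ⟨u, hu.1, hsup u hu⟩, ?_⟩
  rintro g - ⟨u, hu, -, hgu⟩
  refine ⟨u, hu, ?_⟩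
  rw [hsup u hu, patDoubleCoset_eq_of_mem hS1 hS2 hgu]
  rfl

/-- With `G = 1 + 𝔤` a pattern subgroup, `†` an anti-involution as above,
`U = {u ∈ G | u† = u⁻¹}` and `f` a Springer morphism: for all `u, v ∈ U`,
`f(v) ∈ G·f(u)` if and only if `v - 1 ∈ G (u-1) G`.  Consequently the superclasses
`K_u = {v ∈ U | f(v) ∈ G·f(u)}` of `U` are exactly the nonempty sets of the form
`U ∩ K_g`, where `K_g = {h ∈ G | h - 1 ∈ G (g-1) G}` is a superclass of `G` in the algebra
group supercharacter theory. -/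
theorem pattern_superclasses_eq_intersections
    (F : Type) [Field F] [Fintype F] (E : Type) [Field E] [Fintype E] [Algebra F E]
    (hodd : ringChar F ≠ 2)
    {n : ℕ} (S : Set (Fin n × Fin n))
    (hS1 : ∀ p ∈ S, p.1 < p.2)
    (hS2 : ∀ i j k : Fin n, (i, j) ∈ S → (j, k) ∈ S → (i, k) ∈ S)
    (dag : Matrix (Fin n) (Fin n) E → Matrix (Fin n) (Fin n) E)
    (hdag : IsPatternAntiInvolution F E S dag)
    (f : Matrix (Fin n) (Fin n) E → Matrix (Fin n) (Fin n) E)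
    (hf : IsSpringerMorphism F E S dag f) :
    -- the key equivalence
    (∀ u ∈ patUGrp E S dag, ∀ v ∈ patUGrp E S dag,
      (f v ∈ patGrpDot E S dag (f u) ↔
        ∃ a ∈ patGrp E S, ∃ b ∈ patGrp E S, v - 1 = a * (u - 1) * b)) ∧
    -- every superclass of U is of the form U ∩ K_g
    (∀ u ∈ patUGrp E S dag, ∃ g ∈ patGrp E S,
      patSupclass E S dag f u =
        patUGrp E S dag ∩
          {h | h ∈ patGrp E S ∧ ∃ a ∈ patGrp E S, ∃ b ∈ patGrp E S,
            h - 1 = a * (g - 1) * b}) ∧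
    -- every nonempty set of the form U ∩ K_g is a superclass of U
    (∀ g ∈ patGrp E S,
      (patUGrp E S dag ∩
        {h | h ∈ patGrp E S ∧ ∃ a ∈ patGrp E S, ∃ b ∈ patGrp E S,
          h - 1 = a * (g - 1) * b}).Nonempty →
      ∃ u ∈ patUGrp E S dag,
        patUGrp E S dag ∩
          {h | h ∈ patGrp E S ∧ ∃ a ∈ patGrp E S, ∃ b ∈ patGrp E S,
            h - 1 = a * (g - 1) * b} =
          patSupclass E S dag f u) :=
  pattern_superclasses_eq_intersections_general F E hodd S hS1 hS2 dag hdag f hf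
end
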